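/- arXiv:2106.15234 — 2 statements merged into one kernel-verified Lean document; each statement's English description precedes it below -/
import Mathlib

section
/- Let G be a unit ball graph on a point set, let I be a maximal independent set of G, and for each w ∈ I let S_w be a (1+ε)-spanner of the induced unit ball graph on the 2-hop neighborhood N²(w). Then the union S = ⋃_{w∈I} S_w is a (1+ε)-spanner of G. -/
open Classical

noncomputable section

/-- The length of a path given as a list of points: the sum of the metric
distances of consecutive points. -/
def chainLength {X : Type*} [PseudoMetricSpace X] : List X → ℝ
  | [] => 0
  | [_] => 0
  | a :: b :: rest => dist a b + chainLength (b :: rest)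

/-- `p` is a path from `u` to `v` using only (undirected) edges from `E`. -/
def IsPathIn {X : Type*} (E : Set (X × X)) (p : List X) (u v : X) : Prop :=
  p ≠ [] ∧ p.head? = some u ∧ p.getLast? = some v ∧
    p.Chain' (fun a b => (a, b) ∈ E ∨ (b, a) ∈ E)

/-- The edge set of the unit ball graph on the point set `V`: two distinct
points of `V` are adjacent exactly when their distance is at most `1`. -/
def ubgEdges {X : Type*} [PseudoMetricSpace X] (V : Set X) : Set (X × X) :=
  {e | e.1 ∈ V ∧ e.2 ∈ V ∧ e.1 ≠ e.2 ∧ dist e.1 e.2 ≤ 1}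

/-- `v` is within `k` hops of `w` in the unit ball graph on `V`. -/
def HopLe {X : Type*} [PseudoMetricSpace X] (V : Set X) (w v : X) (k : ℕ) : Prop :=
  ∃ p : List X, IsPathIn (ubgEdges V) p w v ∧ (∀ x ∈ p, x ∈ V) ∧ p.length ≤ k + 1

/-- `S` is an `s`-spanner of the graph with vertex set `V` and edge set `E`:
`S` is a sub-edge-set of `E`, and every path in `E` between two vertices can be
replaced by a path in `S` that is at most `s` times longer. (Equivalently,
`dist_S(u,v) ≤ s · dist_E(u,v)` for all `u, v ∈ V`.) -/
def IsSpannerOf {X : Type*} [PseudoMetricSpace X] (V : Set X)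
    (E S : Set (X × X)) (s : ℝ) : Prop :=
  S ⊆ E ∧ ∀ u ∈ V, ∀ v ∈ V, ∀ p : List X, IsPathIn E p u v →
    ∃ q : List X, IsPathIn S q u v ∧ chainLength q ≤ s * chainLength p

/-- The 2-hop neighborhood of `w` in the unit ball graph on `V`. -/
def twoHop {X : Type*} [PseudoMetricSpace X] (V : Set X) (w : X) : Set X :=
  {v | HopLe V w v 2}

/-!
Only the edges of `G` need to be spanned: concatenating spanner paths for the edges of
a `G`-path gives a path at most `1 + ε` times as long. For an edge `ab`, maximality of
`I` puts `a` within distance `1` of some `w ∈ I`, so `a` and `b` are within two hops of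
`w`; the edge is then an edge of the local graph on `N²(w)`, which `S w` spans.
-/

section Paths

variable {X : Type*}

theorem IsPathIn.singleton (E : Set (X × X)) (a : X) : IsPathIn E [a] a a :=
  ⟨List.cons_ne_nil _ _, rfl, rfl, List.isChain_singleton _⟩

theorem IsPathIn.pair {E : Set (X × X)} {a b : X} (hab : (a, b) ∈ E) : IsPathIn E [a, b] a b :=
  ⟨List.cons_ne_nil _ _, rfl, rfl, List.isChain_pair.mpr (Or.inl hab)⟩

theorem IsPathIn.mono {E E' : Set (X × X)} {p : List X} {u v : X}
    (hE : E ⊆ E') (h : IsPathIn E p u v) : IsPathIn E' p u v :=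
  ⟨h.1, h.2.1, h.2.2.1, h.2.2.2.imp fun _ _ => Or.imp (@hE _) (@hE _)⟩

theorem IsPathIn.append {E : Set (X × X)} {p q : List X} {u m v : X}
    (hp : IsPathIn E p u m) (hq : IsPathIn E q m v) : IsPathIn E (p ++ q.tail) u v := by
  obtain ⟨hp₀, hpu, hpm, hpE⟩ := hp
  obtain ⟨-, hqm, hqv, hqE⟩ := hq
  obtain _ | ⟨c, t⟩ := q
  · simp at hqm
  obtain rfl : c = m := by simpa using hqm
  refine ⟨by simp [hp₀], ?_, ?_, ?_⟩
  · obtain _ | _ := p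
    · exact absurd rfl hp₀
    · simpa using hpu
  · rcases t.eq_nil_or_concat with rfl | ⟨t', z, rfl⟩
    · simpa [← Option.some_inj.mp hqv] using hpm
    · simpa [List.getLast?_cons, List.getLast?_append] using hqv
  · refine List.isChain_append.mpr ⟨hpE, hqE.tail, ?_⟩
    rintro x hx y hy
    obtain rfl : x = c := by simpa [hpm] using hx.symm
    exact (List.isChain_cons.mp hqE).1 y hy

end Paths

section Metric

variable {X : Type*} [PseudoMetricSpace X]

theorem chainLength_append : ∀ {p q : List X} {m : X}, p.getLast? = some m → q.head? = some m →
    chainLength (p ++ q.tail) = chainLength p + chainLength q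
  | [], _, _, hp, _ => by simp at hp
  | [a], q, m, hp, hq => by
      obtain rfl : a = m := by simpa using hp
      obtain _ | ⟨c, t⟩ := q
      · simp at hq
      obtain rfl : c = a := by simpa using hq
      simp [chainLength]
  | a :: b :: p, q, m, hp, hq => by
      simp only [List.cons_append, chainLength]
      rw [← List.cons_append, chainLength_append (p := b :: p) (by simpa using hp) hq, add_assoc]

theorem exists_path_of_forall_edge {E S : Set (X × X)} {s : ℝ}
    (hedge : ∀ a b, (a, b) ∈ E ∨ (b, a) ∈ E →
      ∃ q, IsPathIn S q a b ∧ chainLength q ≤ s * dist a b) :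
    ∀ (p : List X) (u v : X), IsPathIn E p u v →
      ∃ q, IsPathIn S q u v ∧ chainLength q ≤ s * chainLength p
  | [], _, _, hp => absurd rfl hp.1
  | [a], u, v, ⟨_, hu, hv, _⟩ => by
      obtain rfl : a = u := by simpa using hu
      obtain rfl : a = v := by simpa using hv
      exact ⟨[a], .singleton S a, by simp [chainLength]⟩
  | a :: b :: p, u, v, ⟨_, hu, hv, hE⟩ => by
      obtain rfl : a = u := by simpa using hu
      obtain ⟨hab, hE⟩ := List.isChain_cons_cons.mp hE
      obtain ⟨q₁, hq₁, hl₁⟩ := hedge a b hab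
      obtain ⟨q₂, hq₂, hl₂⟩ := exists_path_of_forall_edge hedge (b :: p) b v
        ⟨List.cons_ne_nil _ _, rfl, by simpa using hv, hE⟩
      refine ⟨q₁ ++ q₂.tail, hq₁.append hq₂, ?_⟩
      rw [chainLength_append hq₁.2.2.1 hq₂.2.1, chainLength, mul_add]
      linarith

theorem isSpannerOf_of_forall_edge {V : Set X} {E S : Set (X × X)} {s : ℝ} (hSE : S ⊆ E)
    (hedge : ∀ a b, (a, b) ∈ E ∨ (b, a) ∈ E →
      ∃ q, IsPathIn S q a b ∧ chainLength q ≤ s * dist a b) :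
    IsSpannerOf V E S s :=
  ⟨hSE, fun u _ v _ p hp => exists_path_of_forall_edge hedge p u v hp⟩

theorem IsSpannerOf.exists_path_of_mem {V : Set X} {E S : Set (X × X)} {s : ℝ}
    (h : IsSpannerOf V E S s) {a b : X} (ha : a ∈ V) (hb : b ∈ V) (hab : (a, b) ∈ E) :
    ∃ q, IsPathIn S q a b ∧ chainLength q ≤ s * dist a b := by
  simpa [chainLength] using h.2 a ha b hb [a, b] (.pair hab)

end Metric

section UnitBallGraph

variable {X : Type*} [PseudoMetricSpace X] {V : Set X}

theorem ubgEdges_mono {T : Set X} (h : T ⊆ V) : ubgEdges T ⊆ ubgEdges V :=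
  fun _ ⟨h₁, h₂, hne, hd⟩ => ⟨h h₁, h h₂, hne, hd⟩

theorem swap_mem_ubgEdges {a b : X} (h : (a, b) ∈ ubgEdges V) : (b, a) ∈ ubgEdges V :=
  ⟨h.2.1, h.1, h.2.2.1.symm, dist_comm b a ▸ h.2.2.2⟩

theorem hopLe_zero {w : X} (hw : w ∈ V) : HopLe V w w 0 :=
  ⟨[w], .singleton _ w, by simpa using hw, le_rfl⟩

theorem HopLe.succ {w u b : X} {k : ℕ} (h : HopLe V w u k) (hb : b ∈ V) (hub : dist u b ≤ 1) :
    HopLe V w b (k + 1) := by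
  obtain ⟨p, hp, hpV, hlen⟩ := h
  by_cases hne : u = b
  · subst hne
    exact ⟨p, hp, hpV, by omega⟩
  have hu : u ∈ V := hpV u (List.mem_of_mem_getLast? hp.2.2.1)
  refine ⟨p ++ [b], hp.append (.pair ⟨hu, hb, hne, hub⟩), ?_, by simpa using hlen⟩
  intro x hx
  rcases List.mem_append.mp hx with hx | hx
  · exact hpV x hx
  · exact List.mem_singleton.mp hx ▸ hb

theorem twoHop_subset (w : X) : twoHop V w ⊆ V :=
  fun v ⟨_, hp, hpV, _⟩ => hpV v (List.mem_of_mem_getLast? hp.2.2.1)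

theorem mem_twoHop_of_dist_le {w u b : X} (hw : w ∈ V) (hu : u ∈ V) (hb : b ∈ V)
    (hwu : dist w u ≤ 1) (hub : dist u b ≤ 1) : b ∈ twoHop V w :=
  ((hopLe_zero hw).succ hu hwu).succ hb hub

theorem mem_ubgEdges_twoHop {w a b : X} (hw : w ∈ V) (hwa : dist w a ≤ 1)
    (hab : (a, b) ∈ ubgEdges V) : (a, b) ∈ ubgEdges (twoHop V w) :=
  ⟨mem_twoHop_of_dist_le hw hab.1 hab.1 hwa (by simp),
    mem_twoHop_of_dist_le hw hab.1 hab.2.1 hwa hab.2.2.2, hab.2.2⟩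

end UnitBallGraph

theorem union_of_local_spanners_general {X : Type*} [MetricSpace X]
    {ε : ℝ} (V I : Set X) (hIV : I ⊆ V)
    (hmax : ∀ v ∈ V, v ∈ I ∨ ∃ w ∈ I, w ≠ v ∧ dist v w ≤ 1)
    (S : X → Set (X × X))
    (hS : ∀ w ∈ I, IsSpannerOf (twoHop V w) (ubgEdges (twoHop V w)) (S w) (1 + ε)) :
    IsSpannerOf V (ubgEdges V) (⋃ w ∈ I, S w) (1 + ε) := by
  refine isSpannerOf_of_forall_edge
    (Set.iUnion₂_subset fun w hw => (hS w hw).1.trans (ubgEdges_mono (twoHop_subset w))) ?_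
  rintro a b hab
  replace hab : (a, b) ∈ ubgEdges V := hab.elim id swap_mem_ubgEdges
  obtain ⟨w, hwI, hwa⟩ : ∃ w ∈ I, dist w a ≤ 1 := by
    rcases hmax a hab.1 with ha | ⟨w, hwI, -, hwa⟩
    · exact ⟨a, ha, by simp⟩
    · exact ⟨w, hwI, dist_comm w a ▸ hwa⟩
  have hloc := mem_ubgEdges_twoHop (hIV hwI) hwa hab
  obtain ⟨q, hq, hlen⟩ := (hS w hwI).exists_path_of_mem hloc.1 hloc.2.1 hloc
  exact ⟨q, hq.mono (Set.subset_biUnion_of_mem (u := S) hwI), hlen⟩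

/-- Let `G` be the unit ball graph on `V`, `I` a maximal independent set of `G`,
and for each `w ∈ I` let `S w` be a `(1+ε)`-spanner of the induced unit ball
graph on the 2-hop neighborhood `N²(w)`. Then `⋃_{w∈I} S w` is a
`(1+ε)`-spanner of `G`. -/
theorem union_of_local_spanners {X : Type*} [MetricSpace X]
    {ε : ℝ} (hε : 0 < ε) (V I : Set X) (hIV : I ⊆ V)
    (hind : I.Pairwise fun a b => 1 < dist a b)
    (hmax : ∀ v ∈ V, v ∈ I ∨ ∃ w ∈ I, w ≠ v ∧ dist v w ≤ 1)
    (S : X → Set (X × X))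
    (hS : ∀ w ∈ I, IsSpannerOf (twoHop V w) (ubgEdges (twoHop V w)) (S w) (1 + ε)) :
    IsSpannerOf V (ubgEdges V) (⋃ w ∈ I, S w) (1 + ε) :=
  union_of_local_spanners_general V I hIV hmax S hS
end
end

section
/- Let t > 1 and let S be a greedy t-spanner in the Euclidean plane. Fix a segment AB with |AB| ≤ 1 and constants α, β with 1 ≤ α < β. The number of edges PQ of S that cross AB and have length between α·|AB| and β·|AB| is at most [ (2β(2β+1)/α²) · (8t²/(t−1)²) ]². -/
/-!
When the greedy algorithm inserts an edge `h`, every pair of points closer than `|h|` is already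
`t`-connected, because pairs are processed by increasing length. Hence an earlier edge `g`
satisfies `|g₁h₁| + |g₂h₂| ≥ (t-1)/t · |g|`: otherwise the detour `h₁ → g₁ → g₂ → h₂` would have
length `< t|h|` and `h` would have been rejected.

Viewed as points of `ℝ² × ℝ²` with the `ℓ¹` product distance, the edges crossing `AB` with length
in `[α|AB|, β|AB|]` are therefore `2δ`-separated for `δ = (t-1)/(2t) · α|AB|`, and they lie within
`(β+1)|AB|` of `(m, m)`, `m` the midpoint of `AB`. The disjoint `δ`-balls around them fit in a ball
of radius `(β+1)|AB| + δ` of this 4-dimensional space, so comparing volumes bounds their number by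
`((β+1)|AB| + δ)⁴ / δ⁴`, which is below the claimed constant.
-/

open Classical
attribute [local instance] Classical.propDecidable

noncomputable section

/-- The two-dimensional Euclidean plane. -/
abbrev E2 := EuclideanSpace ℝ (Fin 2)


noncomputable section

/-- One step of the naive greedy spanner algorithm: add the pair `e` as an edge
unless a path of length at most `t · dist e.1 e.2` already exists. -/
def greedyStep {X : Type*} [PseudoMetricSpace X] (t : ℝ)
    (S : Finset (X × X)) (e : X × X) : Finset (X × X) :=
  if ∃ p : List X, IsPathIn (↑S) p e.1 e.2 ∧ chainLength p ≤ t * dist e.1 e.2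
  then S else insert e S

/-- The naive greedy spanner algorithm run over a list of pairs. -/
def naiveGreedy {X : Type*} [PseudoMetricSpace X] (t : ℝ) (l : List (X × X)) :
    Finset (X × X) :=
  l.foldl (greedyStep t) ∅


/-- Two segments cross when their open segments intersect. -/
def Crosses (u v a b : E2) : Prop :=
  ∃ z : E2, z ∈ openSegment ℝ u v ∧ z ∈ openSegment ℝ a b

section Paths

variable {X : Type*} [PseudoMetricSpace X] {E E' : Set (X × X)} {u v w : X} {L L' : ℝ}

def HasPathWithin (E : Set (X × X)) (u v : X) (L : ℝ) : Prop :=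
  ∃ p : List X, IsPathIn E p u v ∧ chainLength p ≤ L

namespace HasPathWithin

lemma refl (E : Set (X × X)) (u : X) (hL : 0 ≤ L) : HasPathWithin E u u L :=
  ⟨[u], ⟨by simp, rfl, rfl, List.isChain_singleton u⟩, hL⟩

lemma mono_length (h : HasPathWithin E u v L) (hL : L ≤ L') : HasPathWithin E u v L' :=
  let ⟨p, hp, hlen⟩ := h
  ⟨p, hp, hlen.trans hL⟩

lemma mono_edges (h : HasPathWithin E u v L) (hE : E ⊆ E') : HasPathWithin E' u v L :=
  let ⟨p, ⟨hne, hhead, hlast, hchain⟩, hlen⟩ := h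
  ⟨p, ⟨hne, hhead, hlast, hchain.imp fun _ _ => Or.imp (@hE _) (@hE _)⟩, hlen⟩

lemma cons {b : X} (hub : (u, b) ∈ E ∨ (b, u) ∈ E) (h : HasPathWithin E b v L) :
    HasPathWithin E u v (dist u b + L) := by
  obtain ⟨_ | ⟨a, p⟩, ⟨hne, hhead, hlast, hchain⟩, hlen⟩ := h
  · exact absurd rfl hne
  obtain rfl : a = b := by simpa using hhead
  refine ⟨u :: a :: p, ⟨by simp, rfl, ?_, List.isChain_cons_cons.2 ⟨hub, hchain⟩⟩, ?_⟩
  · rwa [List.getLast?_cons_cons]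
  · change dist u a + chainLength (a :: p) ≤ _
    linarith

@[elab_as_elim]
lemma induction_on {motive : X → ℝ → Prop} (h : HasPathWithin E u v L)
    (refl : ∀ L, 0 ≤ L → motive v L)
    (cons : ∀ u b L, ((u, b) ∈ E ∨ (b, u) ∈ E) → HasPathWithin E b v L → motive b L →
      motive u (dist u b + L)) :
    motive u L := by
  obtain ⟨p, hp, hlen⟩ := h
  induction p generalizing u L with
  | nil => exact absurd rfl hp.1
  | cons a p ih =>
    obtain ⟨-, hhead, hlast, hchain⟩ := hp
    obtain rfl : a = u := by simpa using hhead
    cases p with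
    | nil =>
      obtain rfl : a = v := by simpa using hlast
      exact refl L hlen
    | cons b p =>
      obtain ⟨hab, hchain⟩ := List.isChain_cons_cons.1 hchain
      have hrest : IsPathIn E (b :: p) b v :=
        ⟨by simp, rfl, by rwa [List.getLast?_cons_cons] at hlast, hchain⟩
      have hlen' : chainLength (b :: p) ≤ L - dist a b := by
        change dist a b + chainLength (b :: p) ≤ L at hlen
        linarith
      simpa using cons a b _ hab ⟨_, hrest, hlen'⟩ (ih hrest hlen')

lemma of_mem (h : (u, v) ∈ E) : HasPathWithin E u v (dist u v) := by
  simpa using (refl E v le_rfl).cons (Or.inl h)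

lemma trans (h₁ : HasPathWithin E u v L) (h₂ : HasPathWithin E v w L') :
    HasPathWithin E u w (L + L') := by
  refine h₁.induction_on (fun L hL => h₂.mono_length (le_add_of_nonneg_left hL)) ?_
  intro u b L hub _ ih
  simpa [add_assoc] using ih.cons hub

lemma symm (h : HasPathWithin E u v L) : HasPathWithin E v u L := by
  refine h.induction_on (fun L hL => refl E v hL) ?_
  intro u b L hub _ ih
  have hbu : HasPathWithin E b u (dist u b) := by
    simpa [dist_comm] using (refl E u le_rfl).cons hub.symm
  simpa [add_comm] using ih.trans hbu

end HasPathWithin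

end Paths

section Greedy

variable {X : Type*} [PseudoMetricSpace X] {t : ℝ} {l : List (X × X)}

lemma greedyStep_of_hasPathWithin {S : Finset (X × X)} {e : X × X}
    (h : HasPathWithin ↑S e.1 e.2 (t * dist e.1 e.2)) : greedyStep t S e = S :=
  if_pos h

lemma greedyStep_of_not_hasPathWithin {S : Finset (X × X)} {e : X × X}
    (h : ¬HasPathWithin ↑S e.1 e.2 (t * dist e.1 e.2)) : greedyStep t S e = insert e S :=
  if_neg h

lemma subset_greedyStep (t : ℝ) (S : Finset (X × X)) (e : X × X) : S ⊆ greedyStep t S e := by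
  by_cases h : HasPathWithin ↑S e.1 e.2 (t * dist e.1 e.2)
  · rw [greedyStep_of_hasPathWithin h]
  · rw [greedyStep_of_not_hasPathWithin h]
    exact Finset.subset_insert e S

lemma subset_foldl_greedyStep (t : ℝ) (l : List (X × X)) (S : Finset (X × X)) :
    S ⊆ l.foldl (greedyStep t) S := by
  induction l generalizing S with
  | nil => exact subset_rfl
  | cons e l ih => exact (subset_greedyStep t S e).trans (ih _)

lemma hasPathWithin_foldl_greedyStep (ht : 1 ≤ t) (S : Finset (X × X)) {x : X × X}
    (hx : x ∈ l) :
    HasPathWithin ↑(l.foldl (greedyStep t) S) x.1 x.2 (t * dist x.1 x.2) := by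
  induction l generalizing S with
  | nil => simp at hx
  | cons e l ih =>
    rcases List.mem_cons.1 hx with rfl | hx
    · refine HasPathWithin.mono_edges ?_ (mod_cast subset_foldl_greedyStep t l _)
      by_cases h : HasPathWithin ↑S x.1 x.2 (t * dist x.1 x.2)
      · rwa [greedyStep_of_hasPathWithin h]
      · rw [greedyStep_of_not_hasPathWithin h]
        exact (HasPathWithin.of_mem (by simp)).mono_length (le_mul_of_one_le_left dist_nonneg ht)
    · exact ih _ hx

lemma naiveGreedy_take_mono {m n : ℕ} (h : m ≤ n) :
    naiveGreedy t (l.take m) ⊆ naiveGreedy t (l.take n) := by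
  obtain ⟨r, hr⟩ := List.take_prefix_take_left (l := l) h
  rw [← hr, naiveGreedy, naiveGreedy, List.foldl_append]
  exact subset_foldl_greedyStep t r _

lemma naiveGreedy_take_add_one {n : ℕ} (hn : n < l.length) :
    naiveGreedy t (l.take (n + 1)) = greedyStep t (naiveGreedy t (l.take n)) l[n] := by
  simp only [naiveGreedy, List.take_add_one, List.getElem?_eq_getElem hn, Option.toList_some,
    List.foldl_append, List.foldl_cons, List.foldl_nil]

lemma getElem_mem_naiveGreedy_take_add_one {n : ℕ} (hn : n < l.length)
    (h : ¬HasPathWithin ↑(naiveGreedy t (l.take n)) l[n].1 l[n].2 (t * dist l[n].1 l[n].2)) :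
    l[n] ∈ naiveGreedy t (l.take (n + 1)) := by
  rw [naiveGreedy_take_add_one hn, greedyStep_of_not_hasPathWithin h]
  exact Finset.mem_insert_self _ _

lemma exists_getElem_of_mem_naiveGreedy {x : X × X} (hx : x ∈ naiveGreedy t l) :
    ∃ m, ∃ hm : m < l.length, l[m] = x ∧
      ¬HasPathWithin ↑(naiveGreedy t (l.take m)) x.1 x.2 (t * dist x.1 x.2) := by
  suffices ∀ n, x ∈ naiveGreedy t (l.take n) → ∃ m, ∃ hm : m < l.length, l[m] = x ∧
      ¬HasPathWithin ↑(naiveGreedy t (l.take m)) x.1 x.2 (t * dist x.1 x.2) from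
    this l.length (by rwa [List.take_length])
  intro n hxn
  induction n with
  | zero => simp [naiveGreedy] at hxn
  | succ n ih =>
    by_cases hn : n < l.length
    · rw [naiveGreedy_take_add_one hn] at hxn
      by_cases h : HasPathWithin ↑(naiveGreedy t (l.take n)) l[n].1 l[n].2 (t * dist l[n].1 l[n].2)
      · exact ih (by rwa [greedyStep_of_hasPathWithin h] at hxn)
      · rw [greedyStep_of_not_hasPathWithin h, Finset.mem_insert] at hxn
        rcases hxn with rfl | hxn
        · exact ⟨n, hn, rfl, h⟩
        · exact ih hxn
    · rw [List.take_of_length_le (by omega)] at hxn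
      exact ih (by rwa [List.take_of_length_le (by omega)])

lemma mem_of_mem_naiveGreedy {x : X × X} (hx : x ∈ naiveGreedy t l) : x ∈ l := by
  obtain ⟨m, hm, rfl, -⟩ := exists_getElem_of_mem_naiveGreedy hx
  exact List.getElem_mem hm

lemma mem_take_of_dist_lt (hsort : l.Pairwise fun a b => dist a.1 a.2 ≤ dist b.1 b.2)
    {n : ℕ} (hn : n < l.length) {w : X × X} (hw : w ∈ l)
    (hlt : dist w.1 w.2 < dist l[n].1 l[n].2) : w ∈ l.take n := by
  rw [← List.take_append_drop n l, List.mem_append] at hw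
  refine hw.resolve_right fun hw => hlt.not_ge ?_
  have hdrop := hsort.sublist (List.drop_sublist n l)
  rw [List.drop_eq_getElem_cons hn] at hw hdrop
  rcases List.mem_cons.1 hw with rfl | hw
  · exact le_rfl
  · exact List.rel_of_pairwise_cons hdrop hw

end Greedy

section EndpointGap

variable {X : Type*} [PseudoMetricSpace X] {t : ℝ}

lemma endpoint_gap_of_not_hasPathWithin {E : Set (X × X)} {V : Set X} {g h : X × X}
    (ht : 0 < t) (hg : g ∈ E) (hgV : g.1 ∈ V ∧ g.2 ∈ V) (hhV : h.1 ∈ V ∧ h.2 ∈ V)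
    (hshort : ∀ x ∈ V, ∀ y ∈ V, dist x y < dist h.1 h.2 → HasPathWithin E x y (t * dist x y))
    (hh : ¬HasPathWithin E h.1 h.2 (t * dist h.1 h.2)) (hgh : dist g.1 g.2 ≤ dist h.1 h.2) :
    (t - 1) / t * dist g.1 g.2 ≤ dist g.1 h.1 + dist g.2 h.2 := by
  by_contra! hlt
  have hmul : t * (dist g.1 h.1 + dist g.2 h.2) < (t - 1) * dist g.1 g.2 := by
    rwa [div_mul_eq_mul_div, lt_div_iff₀ ht, mul_comm] at hlt
  have hsum : dist g.1 h.1 + dist g.2 h.2 < dist g.1 g.2 :=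
    lt_of_mul_lt_mul_left (hmul.trans_le (by nlinarith [dist_nonneg (x := g.1) (y := g.2)]))
      ht.le
  have h₁ : dist h.1 g.1 < dist h.1 h.2 := by
    rw [dist_comm]; linarith [dist_nonneg (x := g.2) (y := h.2)]
  have h₂ : dist g.2 h.2 < dist h.1 h.2 := by linarith [dist_nonneg (x := g.1) (y := h.1)]
  have hdetour := ((hshort _ hhV.1 _ hgV.1 h₁).trans (HasPathWithin.of_mem hg)).trans
    (hshort _ hgV.2 _ hhV.2 h₂)
  refine hh (hdetour.mono_length ?_)
  rw [dist_comm h.1 g.1]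
  nlinarith

variable {l : List (X × X)}

lemma hasPathWithin_naiveGreedy_take_of_dist_lt (ht : 1 ≤ t) (V : Finset X)
    (hsort : l.Pairwise fun a b => dist a.1 a.2 ≤ dist b.1 b.2)
    (hcomp : ∀ P ∈ V, ∀ Q ∈ V, P ≠ Q → (P, Q) ∈ l ∨ (Q, P) ∈ l)
    {n : ℕ} (hn : n < l.length) {x y : X} (hx : x ∈ V) (hy : y ∈ V)
    (hlt : dist x y < dist l[n].1 l[n].2) :
    HasPathWithin ↑(naiveGreedy t (l.take n)) x y (t * dist x y) := by
  rcases eq_or_ne x y with rfl | hxy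
  · exact HasPathWithin.refl _ x (by simp)
  rcases hcomp x hx y hy hxy with hxy | hyx
  · exact hasPathWithin_foldl_greedyStep ht ∅ (mem_take_of_dist_lt hsort hn hxy hlt)
  · rw [dist_comm] at hlt ⊢
    exact (hasPathWithin_foldl_greedyStep ht ∅ (mem_take_of_dist_lt hsort hn hyx hlt)).symm

lemma naiveGreedy_endpoint_gap_of_lt (ht : 1 ≤ t) (V : Finset X)
    (hmem : ∀ e ∈ l, e.1 ∈ V ∧ e.2 ∈ V)
    (hsort : l.Pairwise fun a b => dist a.1 a.2 ≤ dist b.1 b.2)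
    (hcomp : ∀ P ∈ V, ∀ Q ∈ V, P ≠ Q → (P, Q) ∈ l ∨ (Q, P) ∈ l)
    {m n : ℕ} (hm : m < l.length) (hn : n < l.length) (hmn : m < n)
    (hgm : ¬HasPathWithin ↑(naiveGreedy t (l.take m)) l[m].1 l[m].2 (t * dist l[m].1 l[m].2))
    (hhn : ¬HasPathWithin ↑(naiveGreedy t (l.take n)) l[n].1 l[n].2 (t * dist l[n].1 l[n].2)) :
    (t - 1) / t * dist l[m].1 l[m].2 ≤ dist l[m].1 l[n].1 + dist l[m].2 l[n].2 :=
  endpoint_gap_of_not_hasPathWithin (by linarith)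
    (naiveGreedy_take_mono hmn (getElem_mem_naiveGreedy_take_add_one hm hgm))
    (hmem _ (List.getElem_mem hm)) (hmem _ (List.getElem_mem hn))
    (fun _ hx _ hy => hasPathWithin_naiveGreedy_take_of_dist_lt ht V hsort hcomp hn hx hy) hhn
    (List.pairwise_iff_getElem.1 hsort m n hm hn hmn)

theorem naiveGreedy_endpoint_gap (ht : 1 ≤ t) (V : Finset X)
    (hmem : ∀ e ∈ l, e.1 ∈ V ∧ e.2 ∈ V)
    (hsort : l.Pairwise fun a b => dist a.1 a.2 ≤ dist b.1 b.2)
    (hcomp : ∀ P ∈ V, ∀ Q ∈ V, P ≠ Q → (P, Q) ∈ l ∨ (Q, P) ∈ l)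
    {e f : X × X} (he : e ∈ naiveGreedy t l) (hf : f ∈ naiveGreedy t l) (hef : e ≠ f) :
    (t - 1) / t * min (dist e.1 e.2) (dist f.1 f.2) ≤ dist e.1 f.1 + dist e.2 f.2 := by
  obtain ⟨m, hm, rfl, hgm⟩ := exists_getElem_of_mem_naiveGreedy he
  obtain ⟨n, hn, rfl, hhn⟩ := exists_getElem_of_mem_naiveGreedy hf
  have hpos : 0 ≤ (t - 1) / t := div_nonneg (by linarith) (by linarith)
  rcases lt_trichotomy m n with hmn | rfl | hnm
  · exact (mul_le_mul_of_nonneg_left (min_le_left _ _) hpos).trans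
      (naiveGreedy_endpoint_gap_of_lt ht V hmem hsort hcomp hm hn hmn hgm hhn)
  · exact absurd rfl hef
  · calc _ ≤ (t - 1) / t * dist l[n].1 l[n].2 :=
          mul_le_mul_of_nonneg_left (min_le_right _ _) hpos
      _ ≤ dist l[n].1 l[m].1 + dist l[n].2 l[m].2 :=
          naiveGreedy_endpoint_gap_of_lt ht V hmem hsort hcomp hn hm hnm hhn hgm
      _ = _ := by rw [dist_comm, dist_comm l[n].2]

end EndpointGap

section Packing

open MeasureTheory Metric Module

theorem card_mul_pow_finrank_le_of_separated {F : Type*} [NormedAddCommGroup F]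
    [NormedSpace ℝ F] [FiniteDimensional ℝ F] (s : Finset F) (c : F) {δ R : ℝ}
    (hδ : 0 < δ) (hR : 0 ≤ R) (hsep : ∀ x ∈ s, ∀ y ∈ s, x ≠ y → 2 * δ ≤ dist x y)
    (hloc : ∀ x ∈ s, dist x c ≤ R) :
    (s.card : ℝ) * δ ^ finrank ℝ F ≤ (R + δ) ^ finrank ℝ F := by
  borelize F
  let μ : Measure F := Measure.addHaar
  have hdisj : (s : Set F).PairwiseDisjoint fun x => ball x δ := fun x hx y hy hxy =>
    ball_disjoint_ball (by linarith [hsep x hx y hy hxy])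
  have hsub : (⋃ x ∈ s, ball x δ) ⊆ ball c (R + δ) :=
    Set.iUnion₂_subset fun x hx => ball_subset_ball' (by linarith [hloc x hx])
  have hvol : (s.card : ENNReal) * ENNReal.ofReal (δ ^ finrank ℝ F) * μ (ball 0 1) ≤
      ENNReal.ofReal ((R + δ) ^ finrank ℝ F) * μ (ball 0 1) := by
    calc _ = μ (⋃ x ∈ s, ball x δ) := by
          rw [measure_biUnion_finset hdisj fun _ _ => measurableSet_ball]
          simp [μ.addHaar_ball_of_pos _ hδ, mul_assoc]
      _ ≤ μ (ball c (R + δ)) := measure_mono hsub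
      _ = _ := μ.addHaar_ball_of_pos _ (by linarith)
  have hcancel := (ENNReal.mul_le_mul_iff_left (measure_ball_pos μ 0 one_pos).ne'
    measure_ball_lt_top.ne).1 hvol
  rw [← ENNReal.ofReal_natCast, ← ENNReal.ofReal_mul (by positivity),
    ENNReal.ofReal_le_ofReal_iff (by positivity)] at hcancel
  exact hcancel

theorem card_mul_pow_four_le_of_separated (s : Finset (E2 × E2)) (c : E2 × E2) {δ R : ℝ}
    (hδ : 0 < δ) (hR : 0 ≤ R)
    (hsep : ∀ e ∈ s, ∀ f ∈ s, e ≠ f → 2 * δ ≤ dist e.1 f.1 + dist e.2 f.2)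
    (hloc : ∀ e ∈ s, dist e.1 c.1 + dist e.2 c.2 ≤ R) :
    (s.card : ℝ) * δ ^ 4 ≤ (R + δ) ^ 4 := by
  have hdim : finrank ℝ (WithLp 1 (E2 × E2)) = 4 := by
    rw [(WithLp.linearEquiv 1 ℝ (E2 × E2)).finrank_eq, finrank_prod, finrank_euclideanSpace_fin]
  have h := card_mul_pow_finrank_le_of_separated
    (s.map (WithLp.equiv 1 (E2 × E2)).symm.toEmbedding) (WithLp.toLp 1 c) hδ hR ?_ ?_
  · rwa [hdim, Finset.card_map] at h
  · simp only [Finset.forall_mem_map]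
    intro e he f hf hef
    simpa [WithLp.prod_dist_eq_of_L1] using hsep e he f hf (by simpa using hef)
  · simp only [Finset.forall_mem_map]
    intro e he
    simpa [WithLp.prod_dist_eq_of_L1] using hloc e he

end Packing

lemma dist_midpoint_le_of_mem_segment {F : Type*} [NormedAddCommGroup F] [NormedSpace ℝ F]
    {z A B : F} (hz : z ∈ segment ℝ A B) : dist z (midpoint ℝ A B) ≤ dist A B / 2 := by
  have hball : ∀ P ∈ ({A, B} : Set F), P ∈ Metric.closedBall (midpoint ℝ A B) (dist A B / 2) := by
    simp [dist_left_midpoint (𝕜 := ℝ), dist_right_midpoint (𝕜 := ℝ), div_eq_inv_mul]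
  exact (convex_closedBall _ _).segment_subset (hball A (by simp)) (hball B (by simp)) hz

lemma dist_add_dist_midpoint_le_of_crosses {P Q A B : E2} (h : Crosses P Q A B) :
    dist P (midpoint ℝ A B) + dist Q (midpoint ℝ A B) ≤ dist P Q + dist A B := by
  obtain ⟨z, hzPQ, hzAB⟩ := h
  have hz := dist_midpoint_le_of_mem_segment (openSegment_subset_segment ℝ _ _ hzAB)
  have hPQ := dist_add_dist_of_mem_segment (openSegment_subset_segment ℝ _ _ hzPQ)
  linarith [dist_triangle P z (midpoint ℝ A B), dist_triangle_left Q (midpoint ℝ A B) z]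

lemma le_crossing_band_bound_of_packing {n t α β d : ℝ} (ht : 1 < t) (hα : 1 ≤ α)
    (hαβ : α < β) (hd : 0 < d)
    (h : n * ((t - 1) / (2 * t) * α * d) ^ 4 ≤
      ((β + 1) * d + (t - 1) / (2 * t) * α * d) ^ 4) :
    n ≤ ((2 * β * (2 * β + 1) / α ^ 2) * (8 * t ^ 2 / (t - 1) ^ 2)) ^ 2 := by
  set δ := (t - 1) / (2 * t) * α * d
  set K := (2 * β * (2 * β + 1) / α ^ 2) * (8 * t ^ 2 / (t - 1) ^ 2)
  have hδ : 0 < δ := mul_pos (mul_pos (div_pos (by linarith) (by linarith)) (by linarith)) hd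
  have ht₁ : t - 1 ≠ 0 := sub_ne_zero.2 ht.ne'
  have hKδ : K * δ ^ 2 = 4 * β * (2 * β + 1) * d ^ 2 := by
    simp only [K, δ]
    field_simp
    ring
  have hδα : δ ≤ α * d := by
    rw [show δ = (t - 1) / (2 * t) * (α * d) by ring]
    exact mul_le_of_le_one_left (by nlinarith) ((div_le_one (by linarith)).2 (by linarith))
  have hR : ((β + 1) * d + δ) ^ 2 ≤ K * δ ^ 2 :=
    calc ((β + 1) * d + δ) ^ 2 ≤ ((2 * β + 1) * d) ^ 2 :=
          pow_le_pow_left₀ (by nlinarith) (by nlinarith) 2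
      _ ≤ K * δ ^ 2 := by rw [hKδ]; nlinarith
  have hnK : n * δ ^ 4 ≤ K ^ 2 * δ ^ 4 :=
    calc n * δ ^ 4 ≤ (((β + 1) * d + δ) ^ 2) ^ 2 := by rw [← pow_mul]; exact h
      _ ≤ (K * δ ^ 2) ^ 2 := pow_le_pow_left₀ (by positivity) hR 2
      _ = K ^ 2 * δ ^ 4 := by ring
  exact le_of_mul_le_mul_right hnK (by positivity)

theorem crossing_band_count_general {t : ℝ} (ht : 1 < t)
    (V : Finset E2) (l : List (E2 × E2))
    (hmem : ∀ e ∈ l, e.1 ∈ V ∧ e.2 ∈ V ∧ e.1 ≠ e.2)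
    (hsort : List.Pairwise (fun a b => dist a.1 a.2 ≤ dist b.1 b.2) l)
    (hcomp : ∀ P ∈ V, ∀ Q ∈ V, P ≠ Q → (P, Q) ∈ l ∨ (Q, P) ∈ l)
    (A B : E2)
    (α β : ℝ) (hα : 1 ≤ α) (hαβ : α < β) :
    (((naiveGreedy t l).filter fun e => Crosses e.1 e.2 A B ∧
        α * dist A B ≤ dist e.1 e.2 ∧ dist e.1 e.2 ≤ β * dist A B).card : ℝ) ≤
      ((2 * β * (2 * β + 1) / α ^ 2) * (8 * t ^ 2 / (t - 1) ^ 2)) ^ 2 := by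
  set d := dist A B
  set S := (naiveGreedy t l).filter fun e => Crosses e.1 e.2 A B ∧
    α * d ≤ dist e.1 e.2 ∧ dist e.1 e.2 ≤ β * d
  obtain hd | hd : 0 = d ∨ 0 < d := dist_nonneg.eq_or_lt
  · have hS : S = ∅ := Finset.filter_eq_empty_iff.2 fun e he ⟨_, _, hle⟩ =>
      (dist_pos.2 (hmem e (mem_of_mem_naiveGreedy he)).2.2).not_ge (by simpa [← hd] using hle)
    rw [hS, Finset.card_empty, Nat.cast_zero]
    positivity
  refine le_crossing_band_bound_of_packing ht hα hαβ hd
    (card_mul_pow_four_le_of_separated S (midpoint ℝ A B, midpoint ℝ A B)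
      (mul_pos (mul_pos (div_pos (by linarith) (by linarith)) (by linarith)) hd)
      (by nlinarith) (fun e he f hf hef => ?_) (fun e he => ?_))
  · simp only [S, Finset.mem_filter] at he hf
    calc 2 * ((t - 1) / (2 * t) * α * d) = (t - 1) / t * (α * d) := by ring
      _ ≤ (t - 1) / t * min (dist e.1 e.2) (dist f.1 f.2) :=
          mul_le_mul_of_nonneg_left (le_min he.2.2.1 hf.2.2.1)
            (div_nonneg (by linarith) (by linarith))
      _ ≤ _ := naiveGreedy_endpoint_gap ht.le V (fun e he => ⟨(hmem e he).1, (hmem e he).2.1⟩)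
          hsort hcomp he.1 hf.1 hef
  · simp only [S, Finset.mem_filter] at he
    linarith [dist_add_dist_midpoint_le_of_crosses he.2.1, he.2.2.2]

/-- **Counting crossing edges in a length band.** Let `t > 1`, `S` the greedy
`t`-spanner in the Euclidean plane, `AB` a segment of length at most `1`, and
`1 ≤ α < β`. The number of edges `PQ` of `S` that cross `AB` and have length
between `α·|AB|` and `β·|AB|` is at most
`[(2β(2β+1)/α²) · (8t²/(t−1)²)]²`. -/
theorem crossing_band_count {t : ℝ} (ht : 1 < t)
    (V : Finset E2) (l : List (E2 × E2))
    (hmem : ∀ e ∈ l, e.1 ∈ V ∧ e.2 ∈ V ∧ e.1 ≠ e.2)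
    (hsort : List.Pairwise (fun a b => dist a.1 a.2 ≤ dist b.1 b.2) l)
    (hcomp : ∀ P ∈ V, ∀ Q ∈ V, P ≠ Q → (P, Q) ∈ l ∨ (Q, P) ∈ l)
    (A B : E2) (hAB : dist A B ≤ 1)
    (α β : ℝ) (hα : 1 ≤ α) (hαβ : α < β) :
    (((naiveGreedy t l).filter fun e => Crosses e.1 e.2 A B ∧
        α * dist A B ≤ dist e.1 e.2 ∧ dist e.1 e.2 ≤ β * dist A B).card : ℝ) ≤
      ((2 * β * (2 * β + 1) / α ^ 2) * (8 * t ^ 2 / (t - 1) ^ 2)) ^ 2 :=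
  crossing_band_count_general ht V l hmem hsort hcomp A B α β hα hαβ
end
end
end
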